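/- Let (P, F) be a Faigle geometry and K := (F, ⊆) its lattice of flats. Then the map γ : P → Jir(K) given by γ(u) = ↓u (the principal down-set of u in P) is a well-defined order isomorphism from P onto the poset of nonzero join-irreducible elements of K. -/
import Mathlib


/-- `X` is a down-set of the poset `P`. -/
def IsDownSet {P : Type*} [PartialOrder P] (X : Set P) : Prop :=
  ∀ ⦃x⦄, x ∈ X → ∀ ⦃y⦄, y ≤ x → y ∈ X

/-- `Y` covers `X` in the poset `(F, ⊆)`. -/
def CoversIn {P : Type*} (F : Set (Set P)) (X Y : Set P) : Prop :=
  X ⊂ Y ∧ ∀ Z ∈ F, ¬(X ⊂ Z ∧ Z ⊂ Y)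

/-- The closure operator associated to the closure system `F`:
`cl(X) = ⋂ {Y ∈ F : X ⊆ Y}`. -/
def clF {P : Type*} (F : Set (Set P)) (X : Set P) : Set P :=
  ⋂₀ {Y | Y ∈ F ∧ X ⊆ Y}

/-- `(P, F)` is a Faigle geometry. -/
structure IsFaigle {P : Type*} [PartialOrder P] [Finite P] (F : Set (Set P)) : Prop where
  univ_mem : Set.univ ∈ F
  inter_mem : ∀ X ∈ F, ∀ Y ∈ F, X ∩ Y ∈ F
  down : ∀ X ∈ F, IsDownSet X
  empty_mem : ∅ ∈ F
  Iic_mem : ∀ u : P, Set.Iic u ∈ F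
  Iio_mem : ∀ u : P, Set.Iio u ∈ F
  cp : ∀ (u : P), ∀ X ∈ F, u ∉ X → Set.Iio u ⊆ X →
      ∃ Y ∈ F, u ∈ Y ∧ CoversIn F X Y

/-- `X` is a nonzero join-irreducible element of the lattice of flats `(F, ⊆)`:
`X ∈ F`, `X` is not the bottom `∅`, and whenever `X` is the join `cl(Y ∪ Z)` of two
flats, one of them equals `X`. -/
def JirFlat {P : Type*} (F : Set (Set P)) (X : Set P) : Prop :=
  X ∈ F ∧ X ≠ ∅ ∧ ∀ Y ∈ F, ∀ Z ∈ F, clF F (Y ∪ Z) = X → Y = X ∨ Z = X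

section Aux
variable {P : Type*} [PartialOrder P] [Finite P] {F : Set (Set P)}

omit [PartialOrder P] [Finite P] in
lemma subset_clF (X : Set P) : X ⊆ clF F X :=
  Set.subset_sInter fun _ hY => hY.2

omit [PartialOrder P] [Finite P] in
lemma clF_subset {Y : Set P} (hY : Y ∈ F) {X : Set P} (hXY : X ⊆ Y) :
    clF F X ⊆ Y :=
  Set.sInter_subset_of_mem ⟨hY, hXY⟩

lemma finset_sInter_mem (hF : IsFaigle F) (s : Finset (Set P))
    (hs : ↑s ⊆ F) (hne : s.Nonempty) : ⋂₀ (s : Set (Set P)) ∈ F := by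
  classical
  induction s using Finset.induction_on with
  | empty => exact absurd hne (by simp)
  | @insert a t ha ih =>
    have haF : a ∈ F := hs (by simp)
    rcases t.eq_empty_or_nonempty with h | h
    · simp [h, haF]
    · have : ⋂₀ (↑(insert a t) : Set (Set P)) = a ∩ ⋂₀ (t : Set (Set P)) := by
        simp [Set.sInter_insert]
      rw [this]
      exact hF.inter_mem _ haF _ (ih (fun x hx => hs (by simp [hx])) h)

lemma clF_mem (hF : IsFaigle F) (X : Set P) : clF F X ∈ F := by
  classical
  have : Fintype P := Fintype.ofFinite P
  have hfin : {Y | Y ∈ F ∧ X ⊆ Y}.Finite := Set.toFinite _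
  have h1 : clF F X = ⋂₀ (hfin.toFinset : Set (Set P)) := by
    unfold clF; rw [Set.Finite.coe_toFinset]
  rw [h1]
  refine finset_sInter_mem hF _ (fun Y hY => ?_) ?_
  · exact ((Set.Finite.mem_toFinset hfin).mp hY).1
  · exact ⟨Set.univ, (Set.Finite.mem_toFinset hfin).mpr ⟨hF.univ_mem, Set.subset_univ X⟩⟩

omit [PartialOrder P] [Finite P] in
lemma clF_of_mem {X : Set P} (hX : X ∈ F) : clF F X = X :=
  subset_antisymm (clF_subset hX subset_rfl) (subset_clF X)

omit [PartialOrder P] [Finite P] in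
lemma clF_union_clF (A B : Set P) :
    clF F (A ∪ clF F B) = clF F (A ∪ B) := by
  have h : {Y | Y ∈ F ∧ A ∪ clF F B ⊆ Y} = {Y | Y ∈ F ∧ A ∪ B ⊆ Y} := by
    ext Y
    simp only [Set.mem_setOf_eq]
    constructor
    · rintro ⟨hY, h⟩
      exact ⟨hY, Set.union_subset (h.trans' Set.subset_union_left)
        ((subset_clF B).trans (h.trans' Set.subset_union_right))⟩
    · rintro ⟨hY, h⟩
      exact ⟨hY, Set.union_subset (h.trans' Set.subset_union_left)
        (clF_subset hY (h.trans' Set.subset_union_right))⟩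
  exact congrArg Set.sInter h

lemma jir_key (hF : IsFaigle F) (S : Finset P) :
    ∀ X : Set P, X ≠ ∅ →
    (∀ Y ∈ F, ∀ Z ∈ F, clF F (Y ∪ Z) = X → Y = X ∨ Z = X) →
    X = clF F (⋃ u ∈ S, Set.Iic u) →
    ∃ u : P, X = Set.Iic u := by
  classical
  induction S using Finset.induction_on with
  | empty =>
    intro X hX0 _ hS
    exfalso
    apply hX0
    rw [hS]
    simpa using clF_subset hF.empty_mem (le_refl (∅ : Set P))
  | @insert a s ha ih =>
    intro X hX0 hjir hS
    rw [Finset.set_biUnion_insert, ← clF_union_clF] at hS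
    rcases hjir _ (hF.Iic_mem a) _ (clF_mem hF _) hS.symm with h | h
    · exact ⟨a, h.symm⟩
    · exact ih X hX0 hjir h.symm

end Aux

/-- The map `γ(u) = ↓u` is a well-defined order isomorphism from `P` onto the poset
of nonzero join-irreducible elements of the lattice of flats `K = (F, ⊆)`. -/
theorem principal_downsets_are_jir {P : Type*} [PartialOrder P] [Finite P]
    {F : Set (Set P)} (hF : IsFaigle F) :
    -- well-defined: each `↓u` is a nonzero join-irreducible flat
    (∀ u : P, JirFlat F (Set.Iic u)) ∧
    -- order isomorphism onto its image (hence injective and order-reflecting)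
    (∀ u v : P, Set.Iic u ⊆ Set.Iic v ↔ u ≤ v) ∧
    -- surjectivity onto the join-irreducible flats
    (∀ X : Set P, JirFlat F X → ∃ u : P, X = Set.Iic u) := by
  obtain ⟨hunion, hdown⟩ := (⟨hF.inter_mem, hF.down⟩ : _ ∧ _)
  refine ⟨?_, ?_, ?_⟩
  · intro u
    refine ⟨hF.Iic_mem u, ?_, ?_⟩
    · intro h
      exact absurd (h ▸ Set.mem_Iic.mpr (le_refl u)) (Set.notMem_empty u)
    · intro Y hY Z hZ hcl
      have hsub : Y ∪ Z ⊆ Set.Iic u := hcl ▸ subset_clF _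
      by_cases hu : u ∈ Y ∪ Z
      · rcases hu with hu | hu
        · left
          exact subset_antisymm (hsub.trans' Set.subset_union_left)
            (fun x hx => hF.down Y hY hu hx)
        · right
          exact subset_antisymm (hsub.trans' Set.subset_union_right)
            (fun x hx => hF.down Z hZ hu hx)
      · exfalso
        have h1 : Y ∪ Z ⊆ Set.Iio u := fun x hx =>
          lt_of_le_of_ne (hsub hx) (fun h => hu (h ▸ hx))
        have h2 : clF F (Y ∪ Z) ⊆ Set.Iio u := clF_subset (hF.Iio_mem u) h1
        exact absurd (h2 (hcl ▸ Set.mem_Iic.mpr (le_refl u))) (lt_irrefl u)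
  · intro u v
    constructor
    · intro h
      exact h (Set.mem_Iic.mpr (le_refl u))
    · intro h x hx
      exact le_trans hx h
  · rintro X ⟨hXF, hX0, hjir⟩
    classical
    have : Fintype P := Fintype.ofFinite P
    refine jir_key hF X.toFinset X hX0 hjir ?_
    have hXU : (⋃ u ∈ X.toFinset, Set.Iic u) = X := by
      ext x
      simp only [Set.mem_iUnion, Set.mem_toFinset, Set.mem_Iic]
      exact ⟨fun ⟨u, hu, hle⟩ => hF.down X hXF hu hle, fun hx => ⟨x, hx, le_refl x⟩⟩
    rw [hXU, clF_of_mem hXF]
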